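/- Let k ≥ 2 be an integer and γ(k) = log 2 + Σ_{i=0}^∞ log(1 + 1/t'_k(i)^k)/k^(i+1) with t'_k(0) = 2, t'_k(i+1) = t'_k(i)^k + 1. Then log 2 + log(1 + 2^(−k))/k < γ(k) < log 2 + log(1 + 2^(−k))/k + 1/(2^(k²) k (k−1)). -/

import Mathlib

/-!
The `i = 0` term of the series is `log (1 + 2^(-k)) / k`. The remaining terms are positive,
and since `t' i ≥ 2 ^ k` for `i ≥ 1`, the bound `log (1 + x) < x` makes the `i`-th of them
smaller than `2^(-k²) / k^(i+1)`; these sum geometrically to `2^(-k²) / (k (k - 1))`.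
-/

open Real

section GeometricWeights

variable {q c : ℝ} {u : ℕ → ℝ}

lemma hasSum_div_pow_succ (hq : 1 < q) : HasSum (fun i : ℕ => c / q ^ (i + 1)) (c / (q - 1)) := by
  have hq0 : 0 < q := one_pos.trans hq
  have h := (hasSum_geometric_of_lt_one (inv_nonneg.2 hq0.le) (inv_lt_one_of_one_lt₀ hq)).mul_left
    (c / q)
  have hf : (fun i : ℕ => c / q * q⁻¹ ^ i) = fun i => c / q ^ (i + 1) := by
    ext i; rw [inv_pow, pow_succ]; field_simp
  have hv : c / q * (1 - q⁻¹)⁻¹ = c / (q - 1) := by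
    have : q - 1 ≠ 0 := (sub_pos.2 hq).ne'
    field_simp
  rwa [hf, hv] at h

lemma summable_div_pow_succ (hq : 1 < q) (hu0 : ∀ i, 0 ≤ u i) (hu : ∀ i, u i ≤ c) :
    Summable fun i => u i / q ^ (i + 1) :=
  (hasSum_div_pow_succ hq).summable.of_nonneg_of_le (fun i => div_nonneg (hu0 i) (by positivity))
    fun i => by gcongr; exact hu i

lemma tsum_div_pow_succ_lt (hq : 1 < q) (hu0 : ∀ i, 0 ≤ u i) (hu : ∀ i, u i < c) :
    ∑' i, u i / q ^ (i + 1) < c / (q - 1) := by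
  have hlt : ∀ i, u i / q ^ (i + 1) < c / q ^ (i + 1) := fun i => by
    have : 0 < q := one_pos.trans hq
    gcongr; exact hu i
  rw [← (hasSum_div_pow_succ hq).tsum_eq]
  exact Summable.tsum_lt_tsum (fun i => (hlt i).le) (hlt 0)
    (summable_div_pow_succ hq hu0 fun i => (hu i).le) (hasSum_div_pow_succ hq).summable

lemma tsum_div_pow_succ_pos (hq : 1 < q) (hu : ∀ i, u i ≤ c) (hu_pos : ∀ i, 0 < u i) :
    0 < ∑' i, u i / q ^ (i + 1) :=
  have hq0 : 0 < q := one_pos.trans hq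
  (summable_div_pow_succ hq (fun i => (hu_pos i).le) hu).tsum_pos
    (fun i => (div_pos (hu_pos i) (by positivity)).le) 0 (div_pos (hu_pos 0) (by positivity))

end GeometricWeights

lemma log_one_add_one_div_pos {x : ℝ} (hx : 0 < x) : 0 < log (1 + 1 / x) :=
  log_pos (by simp [hx])

lemma log_one_add_one_div_lt {x y : ℝ} (hy : 0 < y) (hyx : y ≤ x) :
    log (1 + 1 / x) < 1 / y := by
  have hx : 0 < 1 / x := one_div_pos.2 (hy.trans_le hyx)
  calc log (1 + 1 / x) < 1 + 1 / x - 1 := log_lt_sub_one_of_pos (by positivity) (by linarith)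
    _ = 1 / x := by ring
    _ ≤ 1 / y := one_div_le_one_div_of_le hy hyx

section Recurrence

variable {k : ℕ} {t : ℕ → ℕ}

lemma two_le_of_eq_pow_add_one (h0 : 2 ≤ t 0) (hrec : ∀ i, t (i + 1) = t i ^ k + 1) (i : ℕ) :
    2 ≤ t i := by
  induction i with
  | zero => exact h0
  | succ n ih => rw [hrec]; have := Nat.one_le_pow k _ (by omega : 0 < t n); omega

lemma two_pow_sq_le_pow_succ_of_eq_pow_add_one (h0 : 2 ≤ t 0)
    (hrec : ∀ i, t (i + 1) = t i ^ k + 1) (i : ℕ) : 2 ^ (k ^ 2) ≤ t (i + 1) ^ k := by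
  have h2k : 2 ^ k ≤ t (i + 1) := by
    rw [hrec]
    exact (Nat.pow_le_pow_left (two_le_of_eq_pow_add_one h0 hrec i) k).trans (Nat.le_succ _)
  rw [sq, pow_mul]
  exact Nat.pow_le_pow_left h2k k

end Recurrence

theorem stmt5 (k : ℕ) (hk : 2 ≤ k) (t' : ℕ → ℕ)
    (h0 : t' 0 = 2) (hrec : ∀ i, t' (i + 1) = t' i ^ k + 1) :
    Real.log 2 + Real.log (1 + (2 : ℝ) ^ (-(k : ℝ))) / (k : ℝ) <
      Real.log 2 + ∑' i : ℕ, Real.log (1 + 1 / (t' i : ℝ) ^ k) / (k : ℝ) ^ (i + 1) ∧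
    Real.log 2 + ∑' i : ℕ, Real.log (1 + 1 / (t' i : ℝ) ^ k) / (k : ℝ) ^ (i + 1) <
      Real.log 2 + Real.log (1 + (2 : ℝ) ^ (-(k : ℝ))) / (k : ℝ) +
        1 / ((2 : ℝ) ^ (k ^ 2) * (k : ℝ) * ((k : ℝ) - 1)) := by
  have hq : (1 : ℝ) < k := by exact_mod_cast hk
  have ht : ∀ i, (0 : ℝ) < (t' i : ℝ) ^ k := fun i => by
    have := two_le_of_eq_pow_add_one h0.ge hrec i; positivity
  set u : ℕ → ℝ := fun i => log (1 + 1 / (t' (i + 1) : ℝ) ^ k) / k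
  have hu_pos : ∀ i, 0 < u i := fun i => div_pos (log_one_add_one_div_pos (ht _)) (by positivity)
  have hu_lt : ∀ i, u i < 1 / ((2 : ℝ) ^ (k ^ 2) * k) := fun i => by
    rw [← div_div]
    refine div_lt_div_of_pos_right (log_one_add_one_div_lt (by positivity) ?_) (by positivity)
    exact_mod_cast two_pow_sq_le_pow_succ_of_eq_pow_add_one h0.ge hrec i
  have htail : ∀ i, log (1 + 1 / (t' (i + 1) : ℝ) ^ k) / (k : ℝ) ^ (i + 1 + 1) =
      u i / k ^ (i + 1) := fun i => by rw [pow_succ _ (i + 1), mul_comm, ← div_div]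
  have hhead : log (1 + 1 / (t' 0 : ℝ) ^ k) / (k : ℝ) ^ (0 + 1) =
      log (1 + (2 : ℝ) ^ (-(k : ℝ))) / k := by
    rw [h0, rpow_neg zero_le_two, rpow_natCast]; norm_num
  have hsum : Summable fun i => log (1 + 1 / (t' i : ℝ) ^ k) / (k : ℝ) ^ (i + 1) :=
    (summable_nat_add_iff 1).1 <| by
      simpa only [htail] using
        summable_div_pow_succ hq (fun i => (hu_pos i).le) fun i => (hu_lt i).le
  rw [hsum.tsum_eq_zero_add, hhead]
  simp only [htail]
  have hpos := tsum_div_pow_succ_pos hq (fun i => (hu_lt i).le) hu_pos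
  have hlt := tsum_div_pow_succ_lt hq (fun i => (hu_pos i).le) hu_lt
  rw [div_div] at hlt
  constructor <;> linarith
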